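/- If λ* ≥ 0 componentwise, then every index is bounded by T times the largest one-period reward: β_t(s) ≤ T·max_{s',a,t'} r_{t'}(s',a) for every state s ∈ 𝒮 and time 1 ≤ t ≤ T. In particular, for any λ ∈ ℝ^T with λ ≥ 0 componentwise and λ_t > T·max_{s',a,t'} r_{t'}(s',a), the passive action a = 0 is optimal at time t in every state for the sub-MDP Q(λ). -/
import Mathlib


open Finset

namespace RMAB

/-- Numeric value of an action: the active action `true` counts as `1`. -/
def actVal (a : Bool) : ℝ := if a then 1 else 0

section Core

variable {σ β : Type*} [Fintype σ] [Fintype β] [DecidableEq σ]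

/-- A (randomized) Markov policy: `π s a t` is the probability of taking action `a`
in state `s` at time `t`. -/
def IsPolicy (π : σ → β → ℕ → ℝ) : Prop :=
  (∀ s a t, 0 ≤ π s a t) ∧ ∀ s t, ∑ a : β, π s a t = 1

/-- A transition kernel: `P a s s'` is the probability of moving from `s` to `s'`
when action `a` is taken. -/
def IsKernel (P : β → σ → σ → ℝ) : Prop :=
  (∀ a s s', 0 ≤ P a s s') ∧ ∀ a s, ∑ s' : σ, P a s s' = 1

/-- `saDist P init π t s a` is the probability, under the Markov policy `π` started at
`init`, that at time `t` (1-indexed) the process is in state `s` and takes action `a`. -/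
noncomputable def saDist (P : β → σ → σ → ℝ) (init : σ) (π : σ → β → ℕ → ℝ) :
    ℕ → σ → β → ℝ
  | 0 => fun _ _ => 0
  | 1 => fun s a => (if s = init then (1 : ℝ) else 0) * π s a 1
  | (t + 2) => fun s a =>
      (∑ s' : σ, ∑ a' : β, saDist P init π (t + 1) s' a' * P a' s' s) * π s a (t + 2)

/-- Expected value of `∑_{t=1}^T f t S_t A_t` under the Markov policy `π` started at `init`. -/
noncomputable def expVal (P : β → σ → σ → ℝ) (init : σ) (π : σ → β → ℕ → ℝ)
    (T : ℕ) (f : ℕ → σ → β → ℝ) : ℝ :=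
  ∑ t ∈ Finset.Icc 1 T, ∑ s : σ, ∑ a : β, saDist P init π t s a * f t s a

end Core

section Sub

variable {S : Type*} [Fintype S] [DecidableEq S]

/-- Value of a policy in the sub-MDP with Lagrange penalty `lam t` for the active action. -/
noncomputable def subValue (P : Bool → S → S → ℝ) (s1 : S) (r : ℕ → S → Bool → ℝ)
    (lam : ℕ → ℝ) (T : ℕ) (π : S → Bool → ℕ → ℝ) : ℝ :=
  expVal P s1 π T fun t s a => r t s a - lam t * actVal a

/-- `Q(λ)`: the optimal value of the penalized sub-MDP. -/
noncomputable def Qval (P : Bool → S → S → ℝ) (s1 : S) (r : ℕ → S → Bool → ℝ)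
    (T : ℕ) (lam : ℕ → ℝ) : ℝ :=
  sSup {v | ∃ π : S → Bool → ℕ → ℝ, IsPolicy π ∧ v = subValue P s1 r lam T π}

/-- The transition kernel of the original MDP: `K` arms evolving independently. -/
def jointKernel (P : Bool → S → S → ℝ) (K : ℕ) :
    (Fin K → Bool) → (Fin K → S) → (Fin K → S) → ℝ :=
  fun a s s' => ∏ x, P (a x) (s x) (s' x)

/-- The reward of the original MDP: the sum of the arms' rewards. -/
def jointReward (r : ℕ → S → Bool → ℝ) (K : ℕ) :
    ℕ → (Fin K → S) → (Fin K → Bool) → ℝ :=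
  fun t s a => ∑ x, r t (s x) (a x)

/-- `|a|`: the number of active arms of a joint action. -/
def numActive {K : ℕ} (a : Fin K → Bool) : ℝ := ∑ x, actVal (a x)

/-- Expected total reward of a joint Markov policy in the original MDP with `K` arms,
all started at `s1`. -/
noncomputable def jointValue (P : Bool → S → S → ℝ) (s1 : S) (r : ℕ → S → Bool → ℝ)
    (T K : ℕ) (πb : (Fin K → S) → (Fin K → Bool) → ℕ → ℝ) : ℝ :=
  expVal (jointKernel P K) (fun _ => s1) πb T (jointReward r K)

/-- The Lagrangian relaxation value `P(λ)`: the supremum over all joint Markov policies of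
the expected total reward minus the penalty `∑_t λ_t (|A_t| − m)`. -/
noncomputable def lagrangeValue (P : Bool → S → S → ℝ) (s1 : S) (r : ℕ → S → Bool → ℝ)
    (T K m : ℕ) (lam : ℕ → ℝ) : ℝ :=
  sSup {v | ∃ πb : (Fin K → S) → (Fin K → Bool) → ℕ → ℝ, IsPolicy πb ∧
    v = expVal (jointKernel P K) (fun _ => s1) πb T
      (fun t s a => jointReward r K t s a - lam t * (numActive a - (m : ℝ)))}

/-- A joint Markov policy is feasible if it activates exactly `m` arms in every period
with probability one. -/
def Feasible (P : Bool → S → S → ℝ) (s1 : S) (T K m : ℕ)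
    (πb : (Fin K → S) → (Fin K → Bool) → ℕ → ℝ) : Prop :=
  IsPolicy πb ∧ ∀ t ∈ Finset.Icc 1 T, ∀ s a, numActive a ≠ (m : ℝ) →
    saDist (jointKernel P K) (fun _ => s1) πb t s a = 0

end Sub

end RMAB
namespace RMAB

section Index

variable {S : Type*} [Fintype S] [DecidableEq S]

/-- The deterministic Markov policy corresponding to a decision rule `d`. -/
def detPolicy (d : S → ℕ → Bool) : S → Bool → ℕ → ℝ :=
  fun s a t => if a = d s t then 1 else 0

/-- `d` is a Markov deterministic optimal policy of the sub-MDP `Q(lam)`. -/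
def IsOptDet (P : Bool → S → S → ℝ) (s1 : S) (r : ℕ → S → Bool → ℝ)
    (T : ℕ) (lam : ℕ → ℝ) (d : S → ℕ → Bool) : Prop :=
  subValue P s1 r lam T (detPolicy d) = Qval P s1 r T lam

/-- The index `β_t(s)`: the supremum of those `β` such that some Markov deterministic
optimal policy of the sub-MDP `Q(λ*[β,t])` takes the active action in state `s` at time `t`,
where `λ*[β,t]` is `λ*` with its `t`-th coordinate replaced by `β`. -/
noncomputable def indexβ (P : Bool → S → S → ℝ) (s1 : S) (r : ℕ → S → Bool → ℝ)
    (T : ℕ) (lamstar : ℕ → ℝ) (t : ℕ) (s : S) : ℝ :=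
  sSup {b : ℝ | ∃ d : S → ℕ → Bool,
    IsOptDet P s1 r T (Function.update lamstar t b) d ∧ d s t = true}

end Index

end RMAB
namespace RMAB


section AuxCore

variable {σ β : Type*} [Fintype σ] [Fintype β] [DecidableEq σ]
variable {P : β → σ → σ → ℝ} {init : σ} {π : σ → β → ℕ → ℝ}

lemma saDist_nonneg (hπ : IsPolicy π) (hP : IsKernel P) :
    ∀ t s a, 0 ≤ saDist P init π t s a := by
  intro t
  induction t using Nat.strong_induction_on with
  | _ t ih =>
    match t with
    | 0 => intro s a; simp [saDist]
    | 1 =>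
      intro s a
      simp only [saDist]
      apply mul_nonneg _ (hπ.1 s a 1)
      split <;> norm_num
    | (t + 2) =>
      intro s a
      simp only [saDist]
      apply mul_nonneg _ (hπ.1 s a (t + 2))
      apply Finset.sum_nonneg; intro s' _
      apply Finset.sum_nonneg; intro a' _
      exact mul_nonneg (ih (t + 1) (by omega) s' a') (hP.1 a' s' s)

lemma saDist_factor (hπ : IsPolicy π) {t : ℕ} (ht : 1 ≤ t) (s : σ) (a : β) :
    saDist P init π t s a = (∑ a', saDist P init π t s a') * π s a t := by
  match t with
  | 1 =>
    simp only [saDist]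
    rw [← Finset.mul_sum, hπ.2 s 1, mul_one]
  | (t + 2) =>
    simp only [saDist]
    rw [← Finset.mul_sum, hπ.2 s (t + 2), mul_one]

end AuxCore


section AuxDP

variable {S : Type*} [Fintype S] [DecidableEq S]

/-- Penalized one-period reward. -/
noncomputable def pg (r : ℕ → S → Bool → ℝ) (lam : ℕ → ℝ) (t : ℕ) (s : S) (a : Bool) : ℝ :=
  r t s a - lam t * actVal a

/-- Dynamic-programming value function: `DPW P r lam T k` is the optimal value with
`k` periods remaining, i.e. at time `T+1-k`. -/
noncomputable def DPW (P : Bool → S → S → ℝ) (r : ℕ → S → Bool → ℝ) (lam : ℕ → ℝ) (T : ℕ) :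
    ℕ → S → ℝ
  | 0 => fun _ => 0
  | (k + 1) => fun s =>
      max (pg r lam (T - k) s false + ∑ s', P false s s' * DPW P r lam T k s')
          (pg r lam (T - k) s true + ∑ s', P true s s' * DPW P r lam T k s')

/-- Value of taking action `a` now (with `k` periods to go afterwards) and then optimally. -/
noncomputable def qB (P : Bool → S → S → ℝ) (r : ℕ → S → Bool → ℝ) (lam : ℕ → ℝ) (T : ℕ)
    (k : ℕ) (s : S) (a : Bool) : ℝ :=
  pg r lam (T - k) s a + ∑ s', P a s s' * DPW P r lam T k s'

lemma DPW_succ (P : Bool → S → S → ℝ) (r : ℕ → S → Bool → ℝ) (lam : ℕ → ℝ) (T k : ℕ) (s : S) :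
    DPW P r lam T (k + 1) s = max (qB P r lam T k s false) (qB P r lam T k s true) := rfl

lemma qB_le_DPW (P : Bool → S → S → ℝ) (r : ℕ → S → Bool → ℝ) (lam : ℕ → ℝ) (T k : ℕ)
    (s : S) (a : Bool) : qB P r lam T k s a ≤ DPW P r lam T (k + 1) s := by
  rw [DPW_succ]
  cases a
  · exact le_max_left _ _
  · exact le_max_right _ _

/-- The greedy (DP-optimal) decision rule, breaking ties in favor of the passive action. -/
noncomputable def dOpt (P : Bool → S → S → ℝ) (r : ℕ → S → Bool → ℝ) (lam : ℕ → ℝ) (T : ℕ) :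
    S → ℕ → Bool :=
  fun s t => decide (qB P r lam T (T - t) s false < qB P r lam T (T - t) s true)

lemma qB_dOpt (P : Bool → S → S → ℝ) (r : ℕ → S → Bool → ℝ) (lam : ℕ → ℝ) {T k : ℕ}
    (hk : k ≤ T) (s : S) :
    qB P r lam T k s (dOpt P r lam T s (T - k)) = DPW P r lam T (k + 1) s := by
  have hTk : T - (T - k) = k := by omega
  rw [DPW_succ, dOpt, hTk]
  rcases lt_or_ge (qB P r lam T k s false) (qB P r lam T k s true) with h | h
  · simp [h, max_eq_right h.le]
  · simp [not_lt.2 h, max_eq_left h]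

lemma DPW_nonneg {P : Bool → S → S → ℝ} (hP : IsKernel P) {r : ℕ → S → Bool → ℝ}
    (hr : ∀ t s a, 0 ≤ r t s a) (lam : ℕ → ℝ) (T : ℕ) :
    ∀ k s, 0 ≤ DPW P r lam T k s := by
  intro k
  induction k with
  | zero => intro s; simp [DPW]
  | succ k ih =>
    intro s
    rw [DPW_succ]
    refine le_trans ?_ (le_max_left _ _)
    have : pg r lam (T - k) s false = r (T - k) s false := by
      simp [pg, actVal]
    rw [qB, this]
    have : (0:ℝ) ≤ ∑ s', P false s s' * DPW P r lam T k s' :=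
      Finset.sum_nonneg fun s' _ => mul_nonneg (hP.1 _ _ _) (ih s')
    have h0 := hr (T - k) s false
    linarith

lemma DPW_le {P : Bool → S → S → ℝ} (hP : IsKernel P) {r : ℕ → S → Bool → ℝ}
    {lam : ℕ → ℝ} (hlam : ∀ t, 0 ≤ lam t) {T : ℕ} {rbar : ℝ}
    (hrb : ∀ t ∈ Finset.Icc 1 T, ∀ s a, r t s a ≤ rbar) (hrbar : 0 ≤ rbar) :
    ∀ k, k ≤ T → ∀ s, DPW P r lam T k s ≤ (k : ℝ) * rbar := by
  intro k
  induction k with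
  | zero => intro _ s; simp [DPW]
  | succ k ih =>
    intro hk s
    have hk' : k ≤ T := by omega
    have hb : ∀ a, qB P r lam T k s a ≤ (k + 1 : ℝ) * rbar := by
      intro a
      have h1 : pg r lam (T - k) s a ≤ rbar := by
        have ht : T - k ∈ Finset.Icc 1 T := by
          simp only [Finset.mem_Icc]; omega
        have := hrb (T - k) ht s a
        have h2 : 0 ≤ lam (T - k) * actVal a := by
          apply mul_nonneg (hlam _)
          cases a <;> simp [actVal]
        simp only [pg]; linarith
      have h2 : ∑ s', P a s s' * DPW P r lam T k s' ≤ (k : ℝ) * rbar := by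
        calc ∑ s', P a s s' * DPW P r lam T k s'
            ≤ ∑ s', P a s s' * ((k : ℝ) * rbar) := by
              apply Finset.sum_le_sum; intro s' _
              exact mul_le_mul_of_nonneg_left (ih hk' s') (hP.1 _ _ _)
          _ = (k : ℝ) * rbar := by
              rw [← Finset.sum_mul, hP.2 a s, one_mul]
      rw [qB]; push_cast; linarith
    rw [DPW_succ]
    exact max_le (by exact_mod_cast hb false) (by exact_mod_cast hb true)

lemma qB_true_le {P : Bool → S → S → ℝ} (hP : IsKernel P) {r : ℕ → S → Bool → ℝ}
    {lam : ℕ → ℝ} (hlam : ∀ t, 0 ≤ lam t) {T : ℕ} {rbar : ℝ}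
    (hrb : ∀ t ∈ Finset.Icc 1 T, ∀ s a, r t s a ≤ rbar) (hrbar : 0 ≤ rbar)
    {t : ℕ} (ht1 : 1 ≤ t) (ht2 : t ≤ T) (s : S) :
    qB P r lam T (T - t) s true ≤ (T : ℝ) * rbar - lam t := by
  have hTt : T - (T - t) = t := by omega
  rw [qB, hTt]
  have h1 : pg r lam t s true = r t s true - lam t := by simp [pg, actVal]
  have h2 : r t s true ≤ rbar := hrb t (by simp only [Finset.mem_Icc]; omega) s true
  have h3 : ∑ s', P true s s' * DPW P r lam T (T - t) s' ≤ ((T - t : ℕ) : ℝ) * rbar := by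
    calc ∑ s', P true s s' * DPW P r lam T (T - t) s'
        ≤ ∑ s', P true s s' * (((T - t : ℕ) : ℝ) * rbar) := by
          apply Finset.sum_le_sum; intro s' _
          exact mul_le_mul_of_nonneg_left (DPW_le hP hlam hrb hrbar (T - t) (by omega) s')
            (hP.1 _ _ _)
      _ = ((T - t : ℕ) : ℝ) * rbar := by rw [← Finset.sum_mul, hP.2 true s, one_mul]
  have h4 : ((T - t : ℕ) : ℝ) + 1 ≤ (T : ℝ) := by
    have : (T - t) + 1 ≤ T := by omega
    exact_mod_cast this
  rw [h1]
  nlinarith [mul_le_mul_of_nonneg_right h4 hrbar]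

lemma qB_false_nonneg {P : Bool → S → S → ℝ} (hP : IsKernel P) {r : ℕ → S → Bool → ℝ}
    (hr : ∀ t s a, 0 ≤ r t s a) (lam : ℕ → ℝ) (T k : ℕ) (s : S) :
    0 ≤ qB P r lam T k s false := by
  rw [qB]
  have h1 : pg r lam (T - k) s false = r (T - k) s false := by simp [pg, actVal]
  have h2 : (0:ℝ) ≤ ∑ s', P false s s' * DPW P r lam T k s' :=
    Finset.sum_nonneg fun s' _ => mul_nonneg (hP.1 _ _ _) (DPW_nonneg hP hr lam T k s')
  have := hr (T - k) s false
  rw [h1]; linarith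

lemma dOpt_eq_false {P : Bool → S → S → ℝ} (hP : IsKernel P) {r : ℕ → S → Bool → ℝ}
    (hr : ∀ t s a, 0 ≤ r t s a) {lam : ℕ → ℝ} (hlam : ∀ t, 0 ≤ lam t) {T : ℕ} {rbar : ℝ}
    (hrb : ∀ t ∈ Finset.Icc 1 T, ∀ s a, r t s a ≤ rbar) (hrbar : 0 ≤ rbar)
    {t : ℕ} (ht1 : 1 ≤ t) (ht2 : t ≤ T) (hlamt : (T : ℝ) * rbar < lam t) (s : S) :
    dOpt P r lam T s t = false := by
  rw [dOpt, decide_eq_false_iff_not, not_lt]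
  calc qB P r lam T (T - t) s true ≤ (T : ℝ) * rbar - lam t :=
        qB_true_le hP hlam hrb hrbar ht1 ht2 s
    _ ≤ 0 := by linarith
    _ ≤ qB P r lam T (T - t) s false := qB_false_nonneg hP hr lam T (T - t) s

end AuxDP

section AuxVal

set_option linter.unusedSectionVars false

variable {S : Type*} [Fintype S] [DecidableEq S]
variable (P : Bool → S → S → ℝ) (s1 : S) (r : ℕ → S → Bool → ℝ) (lam : ℕ → ℝ) (T : ℕ)
variable (π : S → Bool → ℕ → ℝ)

/-- State occupancy measure at time `t`. -/
noncomputable def occM (t : ℕ) (s : S) : ℝ := ∑ a, saDist P s1 π t s a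

/-- Expected penalized reward accumulated over the last `k` periods. -/
noncomputable def tailS (k : ℕ) : ℝ :=
  ∑ t ∈ Finset.Icc (T + 1 - k) T, ∑ s, ∑ a, saDist P s1 π t s a * pg r lam t s a

lemma tailS_zero : tailS P s1 r lam T π 0 = 0 := by
  rw [tailS, Finset.Icc_eq_empty (by omega), Finset.sum_empty]

lemma subValue_eq_tailS : subValue P s1 r lam T π = tailS P s1 r lam T π T := by
  rw [subValue, expVal, tailS, show T + 1 - T = 1 by omega]
  rfl

variable {π}

lemma occM_nonneg (hπ : IsPolicy π) (hP : IsKernel P) (t : ℕ) (s : S) :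
    0 ≤ occM P s1 π t s :=
  Finset.sum_nonneg fun a _ => saDist_nonneg hπ hP t s a

lemma occM_one (hπ : IsPolicy π) (s : S) :
    occM P s1 π 1 s = if s = s1 then 1 else 0 := by
  rw [occM]
  simp only [saDist]
  rw [← Finset.mul_sum, hπ.2 s 1, mul_one]

lemma sum_occM_one (hπ : IsPolicy π) (F : S → ℝ) :
    ∑ s, occM P s1 π 1 s * F s = F s1 := by
  simp only [occM_one P s1 hπ]
  simp [ite_mul]

lemma occM_succ (hπ : IsPolicy π) {t : ℕ} (ht : 1 ≤ t) (s : S) :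
    occM P s1 π (t + 1) s = ∑ s', ∑ a', saDist P s1 π t s' a' * P a' s' s := by
  obtain ⟨j, rfl⟩ : ∃ j, t = j + 1 := ⟨t - 1, by omega⟩
  rw [occM]
  simp only [saDist]
  rw [← Finset.mul_sum, hπ.2 s (j + 1 + 1), mul_one]

lemma sum_occM_succ_mul (hπ : IsPolicy π) {t : ℕ} (ht : 1 ≤ t) (F : S → ℝ) :
    ∑ s, occM P s1 π (t + 1) s * F s
      = ∑ s, ∑ a, saDist P s1 π t s a * ∑ s', P a s s' * F s' := by
  simp only [occM_succ P s1 hπ ht, Finset.sum_mul, Finset.mul_sum, mul_assoc]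
  rw [Finset.sum_comm]
  refine Finset.sum_congr rfl fun s' _ => ?_
  rw [Finset.sum_comm]

lemma saDist_mul_factor (hπ : IsPolicy π) {t : ℕ} (ht : 1 ≤ t) (s : S) (F : Bool → ℝ) :
    ∑ a, saDist P s1 π t s a * F a = occM P s1 π t s * ∑ a, π s a t * F a := by
  calc ∑ a, saDist P s1 π t s a * F a
      = ∑ a, occM P s1 π t s * (π s a t * F a) := by
        refine Finset.sum_congr rfl fun a _ => ?_
        rw [saDist_factor hπ ht s a, occM, mul_assoc]
    _ = occM P s1 π t s * ∑ a, π s a t * F a := by rw [Finset.mul_sum]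

/-- Core stage identity. -/
lemma core_identity (hπ : IsPolicy π) {k : ℕ} (hk : k + 1 ≤ T) :
    (∑ s, ∑ a, saDist P s1 π (T - k) s a * pg r lam (T - k) s a)
      + ∑ s, occM P s1 π (T - k + 1) s * DPW P r lam T k s
      = ∑ s, ∑ a, saDist P s1 π (T - k) s a * qB P r lam T k s a := by
  have ht : 1 ≤ T - k := by omega
  rw [sum_occM_succ_mul P s1 hπ ht]
  rw [← Finset.sum_add_distrib]
  refine Finset.sum_congr rfl fun s _ => ?_
  rw [← Finset.sum_add_distrib]
  refine Finset.sum_congr rfl fun a _ => ?_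
  rw [qB, mul_add]

lemma tailS_split {k : ℕ} (hk : k + 1 ≤ T) :
    tailS P s1 r lam T π (k + 1)
      = (∑ s, ∑ a, saDist P s1 π (T - k) s a * pg r lam (T - k) s a)
        + tailS P s1 r lam T π k := by
  rw [tailS, tailS]
  have h1 : T + 1 - (k + 1) = T - k := by omega
  have h2 : T + 1 - k = (T - k) + 1 := by omega
  rw [h1, h2]
  have hins : Finset.Icc (T - k) T = insert (T - k) (Finset.Icc (T - k + 1) T) := by
    rw [Finset.Icc_add_one_left_eq_Ioc, Finset.Ioc_insert_left (by omega : T - k ≤ T)]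
  rw [hins, Finset.sum_insert (by simp [Finset.mem_Icc])]

/-- The fundamental upper bound: any policy's tail value is at most the DP value. -/
lemma tail_le_DPW (hπ : IsPolicy π) (hP : IsKernel P) :
    ∀ k, k ≤ T → tailS P s1 r lam T π k
      ≤ ∑ s, occM P s1 π (T + 1 - k) s * DPW P r lam T k s := by
  intro k
  induction k with
  | zero =>
    intro _
    rw [tailS_zero]
    simp [DPW]
  | succ k ih =>
    intro hk
    have hk' : k ≤ T := by omega
    have h1 : T + 1 - (k + 1) = T - k := by omega
    have h2 : T + 1 - k = (T - k) + 1 := by omega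
    rw [tailS_split P s1 r lam T hk, h1]
    calc (∑ s, ∑ a, saDist P s1 π (T - k) s a * pg r lam (T - k) s a)
          + tailS P s1 r lam T π k
        ≤ (∑ s, ∑ a, saDist P s1 π (T - k) s a * pg r lam (T - k) s a)
          + ∑ s, occM P s1 π (T - k + 1) s * DPW P r lam T k s := by
          have := ih hk'
          rw [h2] at this
          linarith
      _ = ∑ s, ∑ a, saDist P s1 π (T - k) s a * qB P r lam T k s a :=
          core_identity P s1 r lam T hπ hk
      _ ≤ ∑ s, ∑ a, saDist P s1 π (T - k) s a * DPW P r lam T (k + 1) s := by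
          apply Finset.sum_le_sum; intro s _
          apply Finset.sum_le_sum; intro a _
          exact mul_le_mul_of_nonneg_left (qB_le_DPW P r lam T k s a)
            (saDist_nonneg hπ hP _ s a)
      _ = ∑ s, occM P s1 π (T - k) s * DPW P r lam T (k + 1) s := by
          refine Finset.sum_congr rfl fun s _ => ?_
          rw [occM, Finset.sum_mul]

end AuxVal

section AuxDet

set_option linter.unusedSectionVars false

variable {S : Type*} [Fintype S] [DecidableEq S]
variable (P : Bool → S → S → ℝ) (s1 : S) (r : ℕ → S → Bool → ℝ) (lam : ℕ → ℝ) (T : ℕ)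

lemma isPolicy_detPolicy (d : S → ℕ → Bool) : IsPolicy (detPolicy d) := by
  constructor
  · intro s a t
    rw [detPolicy]
    split <;> norm_num
  · intro s t
    rw [Fintype.sum_bool]
    simp only [detPolicy]
    by_cases h : d s t = true <;> simp [h]

/-- For a deterministic policy, stage sums collapse onto the chosen action. -/
lemma det_stage_collapse (d : S → ℕ → Bool) {t : ℕ} (ht : 1 ≤ t) (s : S) (F : Bool → ℝ) :
    ∑ a, saDist P s1 (detPolicy d) t s a * F a
      = occM P s1 (detPolicy d) t s * F (d s t) := by
  rw [saDist_mul_factor P s1 (isPolicy_detPolicy d) ht s F]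
  congr 1
  simp only [detPolicy]
  rw [Fintype.sum_bool]
  by_cases h : d s t = true <;> simp [h]

/-- Gap/step identity for deterministic policies. -/
lemma det_step (d : S → ℕ → Bool) {k : ℕ} (hk : k + 1 ≤ T) :
    (∑ s, occM P s1 (detPolicy d) (T + 1 - (k + 1)) s * DPW P r lam T (k + 1) s)
        - tailS P s1 r lam T (detPolicy d) (k + 1)
      = (∑ s, occM P s1 (detPolicy d) (T - k) s
            * (DPW P r lam T (k + 1) s - qB P r lam T k s (d s (T - k))))
        + ((∑ s, occM P s1 (detPolicy d) (T + 1 - k) s * DPW P r lam T k s)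
            - tailS P s1 r lam T (detPolicy d) k) := by
  have h1 : T + 1 - (k + 1) = T - k := by omega
  have h2 : T + 1 - k = (T - k) + 1 := by omega
  have ht : 1 ≤ T - k := by omega
  have hcore := core_identity P s1 r lam T (isPolicy_detPolicy d) hk
  have hcol : ∑ s, ∑ a, saDist P s1 (detPolicy d) (T - k) s a * qB P r lam T k s a
      = ∑ s, occM P s1 (detPolicy d) (T - k) s * qB P r lam T k s (d s (T - k)) :=
    Finset.sum_congr rfl fun s _ => det_stage_collapse P s1 d ht s _
  rw [tailS_split P s1 r lam T hk, h1, h2] at *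
  rw [hcol] at hcore
  have hexp : ∑ s, occM P s1 (detPolicy d) (T - k) s
        * (DPW P r lam T (k + 1) s - qB P r lam T k s (d s (T - k)))
      = (∑ s, occM P s1 (detPolicy d) (T - k) s * DPW P r lam T (k + 1) s)
        - ∑ s, occM P s1 (detPolicy d) (T - k) s * qB P r lam T k s (d s (T - k)) := by
    rw [← Finset.sum_sub_distrib]
    exact Finset.sum_congr rfl fun s _ => by ring
  rw [hexp]
  linarith

/-- The optimality gap at a single stage is dominated by the total gap. -/
lemma gap_le_total (d : S → ℕ → Bool) (hP : IsKernel P) {j : ℕ} :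
    ∀ k, k ≤ T → j + 1 ≤ k →
      ∑ s, occM P s1 (detPolicy d) (T - j) s
          * (DPW P r lam T (j + 1) s - qB P r lam T j s (d s (T - j)))
        ≤ (∑ s, occM P s1 (detPolicy d) (T + 1 - k) s * DPW P r lam T k s)
            - tailS P s1 r lam T (detPolicy d) k := by
  intro k
  induction k with
  | zero => intro _ h; omega
  | succ k ih =>
    intro hk hj
    rw [det_step P s1 r lam T d hk]
    have hgap : ∀ j', 0 ≤ ∑ s, occM P s1 (detPolicy d) (T - j') s
        * (DPW P r lam T (j' + 1) s - qB P r lam T j' s (d s (T - j'))) := by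
      intro j'
      apply Finset.sum_nonneg; intro s _
      apply mul_nonneg (occM_nonneg P s1 (isPolicy_detPolicy d) hP _ s)
      have := qB_le_DPW P r lam T j' s (d s (T - j'))
      linarith
    rcases Nat.lt_or_ge j k with h | h
    · have := ih (by omega) (by omega)
      have := hgap k
      linarith
    · have hjk : j = k := by omega
      subst hjk
      have h0 : 0 ≤ (∑ s, occM P s1 (detPolicy d) (T + 1 - j) s * DPW P r lam T j s)
          - tailS P s1 r lam T (detPolicy d) j := by
        have := tail_le_DPW P s1 r lam T (isPolicy_detPolicy d) hP j (by omega)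
        linarith
      linarith

/-- The greedy deterministic policy attains the DP value. -/
lemma dOpt_tail_eq (hP : IsKernel P) :
    ∀ k, k ≤ T →
      tailS P s1 r lam T (detPolicy (dOpt P r lam T)) k
        = ∑ s, occM P s1 (detPolicy (dOpt P r lam T)) (T + 1 - k) s * DPW P r lam T k s := by
  intro k
  induction k with
  | zero =>
    intro _
    rw [tailS_zero]
    simp [DPW]
  | succ k ih =>
    intro hk
    have hstep := det_step P s1 r lam T (dOpt P r lam T) hk
    have hzero : ∀ s, DPW P r lam T (k + 1) s
        - qB P r lam T k s (dOpt P r lam T s (T - k)) = 0 := by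
      intro s
      rw [qB_dOpt P r lam (by omega : k ≤ T) s]
      ring
    have : ∑ s, occM P s1 (detPolicy (dOpt P r lam T)) (T - k) s
        * (DPW P r lam T (k + 1) s - qB P r lam T k s (dOpt P r lam T s (T - k))) = 0 := by
      apply Finset.sum_eq_zero; intro s _
      rw [hzero s, mul_zero]
    rw [this] at hstep
    have := ih (by omega)
    linarith

lemma subValue_dOpt (hP : IsKernel P) :
    subValue P s1 r lam T (detPolicy (dOpt P r lam T)) = DPW P r lam T T s1 := by
  rw [subValue_eq_tailS, dOpt_tail_eq P s1 r lam T hP T le_rfl,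
    show T + 1 - T = 1 by omega]
  exact sum_occM_one P s1 (isPolicy_detPolicy _) _

lemma subValue_le_DPW (hP : IsKernel P) {π : S → Bool → ℕ → ℝ} (hπ : IsPolicy π) :
    subValue P s1 r lam T π ≤ DPW P r lam T T s1 := by
  rw [subValue_eq_tailS]
  have := tail_le_DPW P s1 r lam T hπ hP T le_rfl
  rw [show T + 1 - T = 1 by omega, sum_occM_one P s1 hπ] at this
  exact this

lemma Qval_eq_DPW (hP : IsKernel P) :
    Qval P s1 r T lam = DPW P r lam T T s1 := by
  rw [Qval]
  apply IsGreatest.csSup_eq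
  constructor
  · exact ⟨detPolicy (dOpt P r lam T), isPolicy_detPolicy _,
      (subValue_dOpt P s1 r lam T hP).symm⟩
  · rintro v ⟨π, hπ, rfl⟩
    exact subValue_le_DPW P s1 r lam T hP hπ

lemma isOptDet_dOpt (hP : IsKernel P) :
    IsOptDet P s1 r T lam (dOpt P r lam T) := by
  rw [IsOptDet, Qval_eq_DPW P s1 r lam T hP]
  exact subValue_dOpt P s1 r lam T hP

end AuxDet

section AuxShift

set_option linter.unusedSectionVars false

variable {S : Type*} [Fintype S] [DecidableEq S]
variable (P : Bool → S → S → ℝ) (s1 : S) (r : ℕ → S → Bool → ℝ) (T : ℕ)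

lemma subValue_shift (π : S → Bool → ℕ → ℝ) {t : ℕ} (ht1 : 1 ≤ t) (ht2 : t ≤ T)
    {lam lam' : ℕ → ℝ} (hagree : ∀ t', t' ≠ t → lam' t' = lam t') :
    subValue P s1 r lam' T π
      = subValue P s1 r lam T π
        + (lam t - lam' t) * ∑ s, ∑ a, saDist P s1 π t s a * actVal a := by
  rw [subValue, subValue, expVal, expVal]
  have key : (∑ t' ∈ Finset.Icc 1 T, ∑ s, ∑ a,
        saDist P s1 π t' s a * (r t' s a - lam' t' * actVal a))
      - (∑ t' ∈ Finset.Icc 1 T, ∑ s, ∑ a,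
        saDist P s1 π t' s a * (r t' s a - lam t' * actVal a))
      = (lam t - lam' t) * ∑ s, ∑ a, saDist P s1 π t s a * actVal a := by
    rw [← Finset.sum_sub_distrib]
    rw [Finset.sum_eq_single t]
    · rw [← Finset.sum_sub_distrib, Finset.mul_sum]
      refine Finset.sum_congr rfl fun s _ => ?_
      rw [← Finset.sum_sub_distrib, Finset.mul_sum]
      refine Finset.sum_congr rfl fun a _ => ?_
      ring
    · intro t' _ hne
      rw [hagree t' hne, sub_self]
    · intro habs
      exact absurd (Finset.mem_Icc.mpr ⟨ht1, ht2⟩) habs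
  linarith

lemma update_nonneg {lamstar : ℕ → ℝ} (hls : ∀ t, 0 ≤ lamstar t) {t : ℕ} {b : ℝ}
    (hb : 0 ≤ b) : ∀ u, 0 ≤ Function.update lamstar t b u := by
  intro u
  rw [Function.update_apply]
  split
  · exact hb
  · exact hls u

lemma DPW_update_congr {P : Bool → S → S → ℝ} (hP : IsKernel P) {r : ℕ → S → Bool → ℝ}
    (hr : ∀ t s a, 0 ≤ r t s a) {T : ℕ} {rbar : ℝ}
    (hrb : ∀ t ∈ Finset.Icc 1 T, ∀ s a, r t s a ≤ rbar) (hrbar : 0 ≤ rbar)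
    {lamstar : ℕ → ℝ} (hls : ∀ t, 0 ≤ lamstar t)
    {t : ℕ} (ht1 : 1 ≤ t) (ht2 : t ≤ T) {b b' : ℝ}
    (hb : (T : ℝ) * rbar < b) (hb' : (T : ℝ) * rbar < b') :
    ∀ k, k ≤ T → ∀ s, DPW P r (Function.update lamstar t b) T k s
      = DPW P r (Function.update lamstar t b') T k s := by
  have hTr : 0 ≤ (T : ℝ) * rbar := mul_nonneg (Nat.cast_nonneg T) hrbar
  have hb0 : 0 ≤ b := le_trans hTr hb.le
  have hb'0 : 0 ≤ b' := le_trans hTr hb'.le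
  set lam1 := Function.update lamstar t b with hlam1def
  set lam2 := Function.update lamstar t b' with hlam2def
  have hlam1 : ∀ u, 0 ≤ lam1 u := update_nonneg hls hb0
  have hlam2 : ∀ u, 0 ≤ lam2 u := update_nonneg hls hb'0
  intro k
  induction k with
  | zero => intro _ s; simp [DPW]
  | succ k ih =>
    intro hk s
    have hk' : k ≤ T := by omega
    have hsum : ∀ a, ∑ s', P a s s' * DPW P r lam1 T k s'
        = ∑ s', P a s s' * DPW P r lam2 T k s' := by
      intro a
      exact Finset.sum_congr rfl fun s' _ => by rw [ih hk' s']
    have hpgf : pg r lam1 (T - k) s false = pg r lam2 (T - k) s false := by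
      simp [pg, actVal]
    by_cases hteq : T - k = t
    · -- at the modified period the active action is strictly suboptimal for both
      have hkt : k = T - t := by omega
      subst hkt
      have h1 : qB P r lam1 T (T - t) s true ≤ qB P r lam1 T (T - t) s false := by
        have ha := qB_true_le hP hlam1 hrb hrbar ht1 ht2 s
        have hb1 : lam1 t = b := by rw [hlam1def, Function.update_self]
        have := qB_false_nonneg hP hr lam1 T (T - t) s
        rw [hb1] at ha
        linarith
      have h2 : qB P r lam2 T (T - t) s true ≤ qB P r lam2 T (T - t) s false := by
        have ha := qB_true_le hP hlam2 hrb hrbar ht1 ht2 s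
        have hb2 : lam2 t = b' := by rw [hlam2def, Function.update_self]
        have := qB_false_nonneg hP hr lam2 T (T - t) s
        rw [hb2] at ha
        linarith
      rw [DPW_succ, DPW_succ, max_eq_left h1, max_eq_left h2, qB, qB, hpgf, hsum false]
    · have hpg : ∀ a, pg r lam1 (T - k) s a = pg r lam2 (T - k) s a := by
        intro a
        simp only [pg, hlam1def, hlam2def, Function.update_of_ne hteq]
      rw [DPW_succ, DPW_succ, qB, qB, qB, qB, hpg, hpg, hsum, hsum]

lemma occM_zero_of_opt {P : Bool → S → S → ℝ} (hP : IsKernel P) (s1 : S)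
    {r : ℕ → S → Bool → ℝ} (hr : ∀ t s a, 0 ≤ r t s a) {T : ℕ} {rbar : ℝ}
    (hrb : ∀ t ∈ Finset.Icc 1 T, ∀ s a, r t s a ≤ rbar) (hrbar : 0 ≤ rbar)
    {lam : ℕ → ℝ} (hlam : ∀ u, 0 ≤ lam u)
    {t : ℕ} (ht1 : 1 ≤ t) (ht2 : t ≤ T) (hlamt : (T : ℝ) * rbar < lam t)
    {d : S → ℕ → Bool} (hd : IsOptDet P s1 r T lam d) :
    ∀ s, d s t = true → occM P s1 (detPolicy d) t s = 0 := by
  have htotal : (∑ s, occM P s1 (detPolicy d) (T + 1 - T) s * DPW P r lam T T s)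
      - tailS P s1 r lam T (detPolicy d) T = 0 := by
    rw [show T + 1 - T = 1 by omega, sum_occM_one P s1 (isPolicy_detPolicy d),
      ← subValue_eq_tailS]
    rw [IsOptDet, Qval_eq_DPW P s1 r lam T hP] at hd
    rw [hd]
    ring
  have hgap := gap_le_total P s1 r lam T d hP T le_rfl
    (by omega : (T - t) + 1 ≤ T)
  rw [htotal, show T - (T - t) = t by omega] at hgap
  have hterm : ∀ s ∈ Finset.univ, (0:ℝ) ≤ occM P s1 (detPolicy d) t s
      * (DPW P r lam T (T - t + 1) s - qB P r lam T (T - t) s (d s t)) := by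
    intro s _
    apply mul_nonneg (occM_nonneg P s1 (isPolicy_detPolicy d) hP _ s)
    have := qB_le_DPW P r lam T (T - t) s (d s t)
    linarith
  have hsum0 : ∑ s, occM P s1 (detPolicy d) t s
      * (DPW P r lam T (T - t + 1) s - qB P r lam T (T - t) s (d s t)) = 0 :=
    le_antisymm hgap (Finset.sum_nonneg hterm)
  intro s hds
  have heach := (Finset.sum_eq_zero_iff_of_nonneg hterm).mp hsum0 s (Finset.mem_univ s)
  have hpos : 0 < DPW P r lam T (T - t + 1) s - qB P r lam T (T - t) s (d s t) := by
    rw [hds]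
    have h1 := qB_true_le hP hlam hrb hrbar ht1 ht2 s
    have h2 := DPW_nonneg hP hr lam T (T - t + 1) s
    linarith
  rcases mul_eq_zero.mp heach with h | h
  · exact h
  · exfalso; linarith [h, hpos]

lemma activeOcc_zero_of_opt {P : Bool → S → S → ℝ} (hP : IsKernel P) (s1 : S)
    {r : ℕ → S → Bool → ℝ} (hr : ∀ t s a, 0 ≤ r t s a) {T : ℕ} {rbar : ℝ}
    (hrb : ∀ t ∈ Finset.Icc 1 T, ∀ s a, r t s a ≤ rbar) (hrbar : 0 ≤ rbar)
    {lam : ℕ → ℝ} (hlam : ∀ u, 0 ≤ lam u)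
    {t : ℕ} (ht1 : 1 ≤ t) (ht2 : t ≤ T) (hlamt : (T : ℝ) * rbar < lam t)
    {d : S → ℕ → Bool} (hd : IsOptDet P s1 r T lam d) :
    ∑ s, ∑ a, saDist P s1 (detPolicy d) t s a * actVal a = 0 := by
  apply Finset.sum_eq_zero
  intro s _
  rw [det_stage_collapse P s1 d ht1 s actVal]
  by_cases hds : d s t = true
  · rw [occM_zero_of_opt hP s1 hr hrb hrbar hlam ht1 ht2 hlamt hd s hds, zero_mul]
  · have : d s t = false := by simpa using hds
    rw [this]
    simp [actVal]

end AuxShift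

/-- If `λ* ≥ 0` componentwise, then every index is bounded by `T` times the
largest one-period reward: `β_t(s) ≤ T·max r` for every state `s` and time `1 ≤ t ≤ T`.
In particular, for any `λ ≥ 0` with `λ_t > T·max r`, the passive action is optimal at time `t`
in every state for the sub-MDP `Q(λ)`: some Markov deterministic optimal policy of `Q(λ)`
takes the passive action at time `t` in every state. -/
theorem index_le_horizon_mul_max_reward
    {S : Type*} [Fintype S] [DecidableEq S] [Nonempty S]
    (T K m : ℕ) (hT : 1 ≤ T) (hm : m ≤ K)
    (P : Bool → S → S → ℝ) (hP : IsKernel P) (s1 : S)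
    (r : ℕ → S → Bool → ℝ) (hr : ∀ t s a, 0 ≤ r t s a)
    (rbar : ℝ)
    (hrbar_ub : ∀ t ∈ Finset.Icc 1 T, ∀ s a, r t s a ≤ rbar)
    (hrbar_attained : ∃ t ∈ Finset.Icc 1 T, ∃ s a, r t s a = rbar)
    (lamstar : ℕ → ℝ)
    (hargmin : ∀ lam : ℕ → ℝ,
      lagrangeValue P s1 r T K m lamstar ≤ lagrangeValue P s1 r T K m lam)
    (hlamstar_nonneg : ∀ t, 0 ≤ lamstar t) :
    (∀ (s : S) (t : ℕ), 1 ≤ t → t ≤ T →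
      indexβ P s1 r T lamstar t s ≤ (T : ℝ) * rbar) ∧
    ∀ lam : ℕ → ℝ, (∀ t', 0 ≤ lam t') →
      ∀ t : ℕ, 1 ≤ t → t ≤ T → (T : ℝ) * rbar < lam t →
        ∃ d : S → ℕ → Bool, IsOptDet P s1 r T lam d ∧ ∀ s : S, d s t = false := by
  obtain ⟨t0, ht0, s0, a0, hatt⟩ := hrbar_attained
  have hrbar0 : 0 ≤ rbar := hatt ▸ hr t0 s0 a0
  have hTr : 0 ≤ (T : ℝ) * rbar := mul_nonneg (Nat.cast_nonneg T) hrbar0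
  constructor
  · -- Part 1: the index is bounded by `T * rbar`.
    intro s t ht1 ht2
    rw [indexβ]
    set B := {b : ℝ | ∃ d : S → ℕ → Bool,
      IsOptDet P s1 r T (Function.update lamstar t b) d ∧ d s t = true} with hBdef
    by_cases hall : ∀ b ∈ B, b ≤ (T : ℝ) * rbar
    · exact Real.sSup_le hall hTr
    · push_neg at hall
      obtain ⟨b, hbB, hbgt⟩ := hall
      have hup : ∀ b', b ≤ b' → b' ∈ B := by
        intro b' hbb'
        obtain ⟨d, hd, hds⟩ := hbB
        have hb' : (T : ℝ) * rbar < b' := lt_of_lt_of_le hbgt hbb'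
        have hlam1 : ∀ u, 0 ≤ Function.update lamstar t b u :=
          update_nonneg hlamstar_nonneg (le_trans hTr hbgt.le)
        have hlamt1 : (T : ℝ) * rbar < (Function.update lamstar t b) t := by
          rw [Function.update_self]; exact hbgt
        have he := activeOcc_zero_of_opt hP s1 hr hrbar_ub hrbar0 hlam1 ht1 ht2 hlamt1 hd
        have hshift := subValue_shift P s1 r T (detPolicy d) ht1 ht2
          (lam := Function.update lamstar t b) (lam' := Function.update lamstar t b')
          (fun t' hne => by rw [Function.update_of_ne hne, Function.update_of_ne hne])
        rw [he, mul_zero, add_zero] at hshift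
        refine ⟨d, ?_, hds⟩
        rw [IsOptDet, hshift, hd, Qval_eq_DPW P s1 r _ T hP, Qval_eq_DPW P s1 r _ T hP]
        exact DPW_update_congr hP hr hrbar_ub hrbar0 hlamstar_nonneg ht1 ht2 hbgt hb'
          T le_rfl s1
      have hnb : ¬ BddAbove B := by
        rintro ⟨ub, hub⟩
        have h1 : max b (ub + 1) ∈ B := hup _ (le_max_left _ _)
        have h2 := hub h1
        have h3 := le_max_right b (ub + 1)
        linarith
      rw [Real.sSup_of_not_bddAbove hnb]
      exact hTr
  · -- Part 2: the greedy DP policy is passive at time `t` everywhere.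
    intro lam hlam t ht1 ht2 hlamt
    exact ⟨dOpt P r lam T, isOptDet_dOpt P s1 r lam T hP,
      fun s => dOpt_eq_false hP hr hlam hrbar_ub hrbar0 ht1 ht2 hlamt s⟩


end RMAB
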